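/- A complete biharmonic hypersurface M^m of constant scalar curvature in a non-positively curved Einstein manifold is minimal if either (a) |∇H| ∈ L^p(M) for some 2 < p < ∞, or (b) |∇H| ∈ L²(M) and the Ricci curvature of M is bounded below by −c(1 + r(x)²), where r is the distance function. -/

import Mathlib

noncomputable section

open scoped RealInnerProductSpace BigOperators

/-- Abstract data encoding an isometrically immersed (connected, orientable) hypersurface
`M^m ↪ N^{m+1}`: `V` is a model for the tangent spaces of `M` (an `m`-dimensional real
inner product space), `A` is the shape operator field, `H` the mean curvature function
(so `trace A = m H`), together with the gradient, Laplace and Hessian operators and the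
Ricci curvature of the induced metric, subject to the standard rules of Riemannian
calculus (connectedness of `M` is encoded by `const_of_grad`, and the Bochner formula
holds).  `mixed p X Y` denotes the ambient curvature term `R^N(X, ξ, Y, ξ)` at `p`,
where `ξ` is the chosen unit normal. -/
structure HypersurfaceData (m : ℕ) (M : Type) (V : Type)
    [NormedAddCommGroup V] [InnerProductSpace ℝ V] [FiniteDimensional ℝ V] : Type where
  dimV : Module.finrank ℝ V = m
  /-- the shape operator -/
  A : M → V →ₗ[ℝ] V
  A_symm : ∀ p (x y : V), ⟪A p x, y⟫ = ⟪x, A p y⟫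
  /-- the mean curvature function -/
  H : M → ℝ
  trace_A : ∀ p, LinearMap.trace ℝ V (A p) = m * H p
  /-- the gradient operator of `(M, g)` -/
  grad : (M → ℝ) → M → V
  /-- the Laplace operator of `(M, g)` -/
  lap : (M → ℝ) → M → ℝ
  /-- `hess2 f` is `|∇df|²`, the squared norm of the Hessian of `f` -/
  hess2 : (M → ℝ) → M → ℝ
  /-- the Ricci curvature of `(M, g)` -/
  ricci : M → V → V → ℝ
  /-- `mixed p X Y = R^N(X, ξ, Y, ξ)` -/
  mixed : M → V → V → ℝ
  grad_add : ∀ f g : M → ℝ, grad (fun p => f p + g p) = fun p => grad f p + grad g p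
  grad_mul : ∀ f g : M → ℝ,
    grad (fun p => f p * g p) = fun p => f p • grad g p + g p • grad f p
  grad_const : ∀ c : ℝ, grad (fun _ => c) = fun _ => 0
  lap_const : ∀ c : ℝ, lap (fun _ => c) = fun _ => 0
  const_of_grad : ∀ f : M → ℝ, (∀ p, grad f p = 0) → ∀ p q, f p = f q
  hess2_nonneg : ∀ f p, 0 ≤ hess2 f p
  hess2_bound : ∀ f p, (lap f p) ^ 2 ≤ m * hess2 f p
  bochner : ∀ (f : M → ℝ) (p : M),
    lap (fun q => ‖grad f q‖ ^ 2) p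
      = 2 * (hess2 f p + ricci p (grad f p) (grad f p) + ⟪grad f p, grad (lap f) p⟫)

namespace HypersurfaceData

variable {m : ℕ} {M V : Type} [NormedAddCommGroup V] [InnerProductSpace ℝ V]
  [FiniteDimensional ℝ V] (D : HypersurfaceData m M V)

/-- `|A|²`, the squared norm of the shape operator. -/
def normA2 (p : M) : ℝ := LinearMap.trace ℝ V (D.A p ∘ₗ D.A p)

/-- The scalar curvature of `M` (trace of the Ricci curvature). -/
def scal (p : M) : ℝ :=
  ∑ i, D.ricci p (stdOrthonormalBasis ℝ V i) (stdOrthonormalBasis ℝ V i)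

/-- `M` has constant scalar curvature. -/
def ConstScal : Prop := ∀ p q, D.scal p = D.scal q

/-- `M` is minimal, i.e. `H ≡ 0`. -/
def Minimal : Prop := ∀ p, D.H p = 0

/-- The biharmonic equations for a hypersurface of an Einstein manifold with
`Ric^N = lam·h` :  `ΔH = H(|A|² - lam)` and `A(∇H) + (m/2) H ∇H = 0`. -/
def IsBiharmonic (lam : ℝ) : Prop :=
  (∀ p, D.lap D.H p = D.H p * (D.normA2 p - lam)) ∧
  (∀ p, D.A p (D.grad D.H p) + ((m : ℝ) / 2 * D.H p) • D.grad D.H p = 0)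

/-- The contracted Gauss equation for a hypersurface of a space form of constant
sectional curvature `C`, where `Ric^N(X,Y) = m C ⟨X,Y⟩` and `R^N(X,ξ,Y,ξ) = C ⟨X,Y⟩`
for tangent `X, Y`. -/
def SpaceFormGauss (C : ℝ) : Prop :=
  ∀ p (X Y : V), (m : ℝ) * C * ⟪X, Y⟫
    = D.ricci p X Y + ⟪D.A p X, D.A p Y⟫ - m * D.H p * ⟪D.A p X, Y⟫ + C * ⟪X, Y⟫

/-- The contracted Gauss equation for a hypersurface of an Einstein manifold with
`Ric^N = lam·h`. -/
def EinsteinAmbientGauss (lam : ℝ) : Prop :=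
  ∀ p (X Y : V), lam * ⟪X, Y⟫
    = D.ricci p X Y + ⟪D.A p X, D.A p Y⟫ - m * D.H p * ⟪D.A p X, Y⟫ + D.mixed p X Y

/-- `Ric^N(ξ,ξ) = lam`: the trace over the tangent directions of `R^N(·,ξ,·,ξ)`
equals the ambient Ricci curvature in the normal direction. -/
def MixedTrace (lam : ℝ) : Prop :=
  ∀ p, ∑ i, D.mixed p (stdOrthonormalBasis ℝ V i) (stdOrthonormalBasis ℝ V i) = lam

end HypersurfaceData

/-- A complete hypersurface: the base data together with the `L^p` classes of functions
and the maximum principles of Yau and Karp–Li type (Theorem MP) valid on complete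
Riemannian manifolds. `r` is the distance function from a fixed point. -/
structure CompleteHypersurfaceData (m : ℕ) (M : Type) (V : Type)
    [NormedAddCommGroup V] [InnerProductSpace ℝ V] [FiniteDimensional ℝ V]
    extends HypersurfaceData m M V : Type where
  /-- `MemLp f q` means `f ∈ L^q(M)` -/
  MemLp : (M → ℝ) → ℝ → Prop
  memLp_sq : ∀ (f : M → ℝ) (q : ℝ), MemLp f q → MemLp (fun x => (f x) ^ 2) (q / 2)
  /-- the distance function from a fixed point of `M` -/
  r : M → ℝ
  /-- maximum principle (i): if `Ric^M` is bounded from below, `f ≥ 0` is bounded from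
  above and `Δf ≥ ε f` for some `ε > 0`, then `f` is constant -/
  maxp_bounded : ∀ (f : M → ℝ) (ε : ℝ), 0 < ε → (∀ p, 0 ≤ f p) →
    (∃ B : ℝ, ∀ p, f p ≤ B) →
    (∃ K : ℝ, ∀ p (X : V), K * ‖X‖ ^ 2 ≤ ricci p X X) →
    (∀ p, ε * f p ≤ lap f p) → ∀ p q, f p = f q
  /-- maximum principle (ii): a nonnegative `L^q` (`1 < q < ∞`) subharmonic function is
  constant -/
  maxp_Lp : ∀ (f : M → ℝ) (q : ℝ), 1 < q → (∀ p, 0 ≤ f p) → MemLp f q →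
    (∀ p, 0 ≤ lap f p) → ∀ p p', f p = f p'
  /-- maximum principle (iii): a nonnegative `L¹` subharmonic function is constant,
  provided `Ric^M ≥ -c(1 + r(x)²)` -/
  maxp_L1 : ∀ f : M → ℝ, (∀ p, 0 ≤ f p) → MemLp f 1 → (∀ p, 0 ≤ lap f p) →
    (∃ c : ℝ, 0 < c ∧ ∀ p (X : V), -(c * (1 + r p ^ 2)) * ‖X‖ ^ 2 ≤ ricci p X X) →
    ∀ p q, f p = f q

/-! Since `M` has constant scalar curvature, the traced Gauss equation gives `|A|² = m²H² + C`,
so `ΔH = m²H³ + (C - λ)H`, and the second biharmonic equation says `∇H` is a principal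
direction with principal curvature `-mH/2`. Substituting both into Bochner's formula for `H`
yields
`½ Δ|∇H|² = |∇²H|² + (|A|² + 5m²H²/4)|∇H|² - R^N(∇H, ξ, ∇H, ξ) ≥ |∇²H|²`.
So `|∇H|²` is a nonnegative subharmonic function in `L^{p/2}` (resp. `L¹`), hence constant by
the maximum principle; then `∇²H = 0`, so `ΔH = H(|A|² - λ) = 0`, and as `λ ≤ 0` a point with
`H ≠ 0` would have `|A|² = 0`, i.e. `A = 0` and `mH = tr A = 0`. -/

namespace HypersurfaceData

variable {m : ℕ} {M V : Type} [NormedAddCommGroup V] [InnerProductSpace ℝ V]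
  [FiniteDimensional ℝ V] (D : HypersurfaceData m M V)

def Subharmonic (f : M → ℝ) : Prop := ∀ p, 0 ≤ D.lap f p

theorem grad_const_mul (c : ℝ) (f : M → ℝ) :
    D.grad (fun q => c * f q) = fun q => c • D.grad f q := by
  rw [D.grad_mul, D.grad_const]
  simp

theorem grad_pow_succ (f : M → ℝ) (n : ℕ) :
    D.grad (fun q => f q ^ (n + 1)) = fun q => ((n + 1 : ℝ) * f q ^ n) • D.grad f q := by
  induction n with
  | zero => simp
  | succ n ih =>
    simp_rw [pow_succ _ (n + 1)]
    rw [D.grad_mul, ih]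
    funext q
    push_cast
    module

theorem lap_eq_zero_of_forall_eq {f : M → ℝ} (hf : ∀ a b, f a = f b) (p : M) :
    D.lap f p = 0 := by
  rw [show f = fun _ => f p from funext fun q => hf q p, D.lap_const]

theorem lap_eq_zero_of_hess2_eq_zero {f : M → ℝ} {p : M} (h : D.hess2 f p = 0) :
    D.lap f p = 0 := by
  have hbound := D.hess2_bound f p
  rw [h, mul_zero] at hbound
  exact pow_eq_zero_iff two_ne_zero |>.mp (le_antisymm hbound (sq_nonneg _))

theorem normA2_eq_sum_norm_sq (p : M) :
    D.normA2 p = ∑ i, ‖D.A p (stdOrthonormalBasis ℝ V i)‖ ^ 2 := by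
  rw [normA2, LinearMap.trace_eq_sum_inner _ (stdOrthonormalBasis ℝ V)]
  refine Finset.sum_congr rfl fun i _ => ?_
  rw [LinearMap.comp_apply, ← D.A_symm, real_inner_self_eq_norm_sq]

theorem normA2_nonneg (p : M) : 0 ≤ D.normA2 p := by
  rw [normA2_eq_sum_norm_sq]
  positivity

theorem sum_inner_A_self (p : M) :
    ∑ i, ⟪D.A p (stdOrthonormalBasis ℝ V i), stdOrthonormalBasis ℝ V i⟫ = m * D.H p := by
  simp only [← D.trace_A p, LinearMap.trace_eq_sum_inner _ (stdOrthonormalBasis ℝ V),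
    real_inner_comm]

theorem H_eq_zero_of_normA2_eq_zero (hm : m ≠ 0) {p : M} (h : D.normA2 p = 0) :
    D.H p = 0 := by
  have hA : ∀ i, D.A p (stdOrthonormalBasis ℝ V i) = 0 := by
    simpa [normA2_eq_sum_norm_sq, Finset.sum_eq_zero_iff_of_nonneg] using h
  have hmH := D.sum_inner_A_self p
  simp only [hA, inner_zero_left, Finset.sum_const_zero] at hmH
  simpa [hm] using hmH.symm

variable {D} {lam : ℝ}

theorem MixedTrace.lam_nonpos (hmix : D.MixedTrace lam)
    (hnonpos : ∀ p (X : V), D.mixed p X X ≤ 0) (p : M) : lam ≤ 0 := by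
  rw [← hmix p]
  exact Finset.sum_nonpos fun i _ => hnonpos p _

theorem EinsteinAmbientGauss.scal_add_normA2 (hgauss : D.EinsteinAmbientGauss lam)
    (hmix : D.MixedTrace lam) (p : M) :
    D.scal p + D.normA2 p = (m : ℝ) ^ 2 * D.H p ^ 2 + (m - 1) * lam := by
  let e := stdOrthonormalBasis ℝ V
  have htrace := Finset.sum_congr rfl fun i (_ : i ∈ Finset.univ) => hgauss p (e i) (e i)
  simp only [Finset.sum_add_distrib, Finset.sum_sub_distrib, ← Finset.mul_sum,
    e.inner_eq_one, Finset.sum_const, Finset.card_univ, Fintype.card_fin, D.dimV,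
    real_inner_self_eq_norm_sq] at htrace
  rw [← normA2_eq_sum_norm_sq, sum_inner_A_self, hmix p] at htrace
  rw [scal]
  linear_combination -htrace

theorem ConstScal.exists_normA2_eq (hscal : D.ConstScal) (hgauss : D.EinsteinAmbientGauss lam)
    (hmix : D.MixedTrace lam) : ∃ C, ∀ q, D.normA2 q = (m : ℝ) ^ 2 * D.H q ^ 2 + C := by
  rcases isEmpty_or_nonempty M with hM | ⟨⟨p⟩⟩
  · exact ⟨0, fun q => isEmptyElim q⟩
  · refine ⟨(m - 1) * lam - D.scal p, fun q => ?_⟩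
    linarith [hgauss.scal_add_normA2 hmix q, hscal q p]

theorem IsBiharmonic.grad_lap_H (hbh : D.IsBiharmonic lam) {C : ℝ}
    (hC : ∀ q, D.normA2 q = (m : ℝ) ^ 2 * D.H q ^ 2 + C) (q : M) :
    D.grad (D.lap D.H) q = (3 * (m : ℝ) ^ 2 * D.H q ^ 2 + (C - lam)) • D.grad D.H q := by
  have hlap : D.lap D.H = fun q => (m : ℝ) ^ 2 * D.H q ^ 3 + (C - lam) * D.H q := by
    funext q
    rw [hbh.1 q, hC q]
    ring
  rw [hlap, D.grad_add, D.grad_const_mul, D.grad_const_mul, D.grad_pow_succ]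
  module

theorem EinsteinAmbientGauss.ricci_grad_H (hgauss : D.EinsteinAmbientGauss lam)
    (hbh : D.IsBiharmonic lam) (q : M) :
    D.ricci q (D.grad D.H q) (D.grad D.H q)
      = (lam - 3 / 4 * (m : ℝ) ^ 2 * D.H q ^ 2) * ‖D.grad D.H q‖ ^ 2
        - D.mixed q (D.grad D.H q) (D.grad D.H q) := by
  have h := hgauss q (D.grad D.H q) (D.grad D.H q)
  rw [eq_neg_of_add_eq_zero_left (hbh.2 q), ← neg_smul] at h
  simp only [real_inner_smul_left, real_inner_smul_right] at h
  rw [real_inner_self_eq_norm_sq] at h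
  linear_combination -h

theorem lap_norm_grad_H_sq (hgauss : D.EinsteinAmbientGauss lam) (hbh : D.IsBiharmonic lam)
    {C : ℝ} (hC : ∀ q, D.normA2 q = (m : ℝ) ^ 2 * D.H q ^ 2 + C) (q : M) :
    D.lap (fun q => ‖D.grad D.H q‖ ^ 2) q
      = 2 * (D.hess2 D.H q + (D.normA2 q + 5 / 4 * (m : ℝ) ^ 2 * D.H q ^ 2) * ‖D.grad D.H q‖ ^ 2
        - D.mixed q (D.grad D.H q) (D.grad D.H q)) := by
  rw [D.bochner, hgauss.ricci_grad_H hbh, hbh.grad_lap_H hC, real_inner_smul_right,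
    real_inner_self_eq_norm_sq]
  linear_combination (-2 * ‖D.grad D.H q‖ ^ 2) * hC q

theorem two_mul_hess2_H_le_lap_norm_grad_H_sq (hgauss : D.EinsteinAmbientGauss lam)
    (hbh : D.IsBiharmonic lam) {C : ℝ} (hC : ∀ q, D.normA2 q = (m : ℝ) ^ 2 * D.H q ^ 2 + C)
    (hnonpos : ∀ p (X : V), D.mixed p X X ≤ 0) (q : M) :
    2 * D.hess2 D.H q ≤ D.lap (fun q => ‖D.grad D.H q‖ ^ 2) q := by
  rw [lap_norm_grad_H_sq hgauss hbh hC]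
  have hA2 : 0 ≤ (D.normA2 q + 5 / 4 * (m : ℝ) ^ 2 * D.H q ^ 2) * ‖D.grad D.H q‖ ^ 2 := by
    have := D.normA2_nonneg q
    positivity
  linarith [hnonpos q (D.grad D.H q)]

end HypersurfaceData

namespace CompleteHypersurfaceData

variable {m : ℕ} {M V : Type} [NormedAddCommGroup V] [InnerProductSpace ℝ V]
  [FiniteDimensional ℝ V] (D : CompleteHypersurfaceData m M V)

theorem sq_eq_sq_of_subharmonic {g : M → ℝ}
    (hsub : D.Subharmonic fun q => g q ^ 2)
    (hg : (∃ pe : ℝ, 2 < pe ∧ D.MemLp g pe) ∨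
      (D.MemLp g 2 ∧ ∃ c : ℝ, 0 < c ∧
        ∀ q (X : V), -(c * (1 + D.r q ^ 2)) * ‖X‖ ^ 2 ≤ D.ricci q X X))
    (a b : M) : g a ^ 2 = g b ^ 2 := by
  rcases hg with ⟨pe, hpe, hmem⟩ | ⟨hmem, hricci⟩
  · exact D.maxp_Lp _ (pe / 2) (by linarith) (fun q => sq_nonneg _) (D.memLp_sq g pe hmem)
      hsub a b
  · have hmem1 : D.MemLp (fun q => g q ^ 2) 1 := by simpa using D.memLp_sq g 2 hmem
    exact D.maxp_L1 _ (fun q => sq_nonneg _) hmem1 hsub hricci a b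

end CompleteHypersurfaceData

/-- **Proposition (complete biharmonic hypersurfaces of constant scalar curvature in
non-positively curved Einstein manifolds).**  A complete biharmonic hypersurface `M^m`
of constant scalar curvature in a non-positively curved Einstein manifold `N^{m+1}`
(with `Ric^N = λ h`; non-positive curvature is encoded by `R^N(X,ξ,X,ξ) ≤ 0`) is
minimal if either (a) `|∇H| ∈ L^p(M)` for some `2 < p < ∞`, or (b) `|∇H| ∈ L²(M)` and
the Ricci curvature of `M` is bounded from below by `−c(1 + r(x)²)`, where `r` is the
distance function on `M`. -/
theorem complete_biharmonic_nonpositive_einstein_minimal {M V : Type}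
    [NormedAddCommGroup V] [InnerProductSpace ℝ V] [FiniteDimensional ℝ V]
    {m : ℕ} (hm : 0 < m) (D : CompleteHypersurfaceData m M V) (lam : ℝ)
    (hgauss : D.toHypersurfaceData.EinsteinAmbientGauss lam)
    (hmix : D.toHypersurfaceData.MixedTrace lam)
    (hnonpos : ∀ p (X : V), D.mixed p X X ≤ 0)
    (hscal : D.toHypersurfaceData.ConstScal)
    (hbh : D.toHypersurfaceData.IsBiharmonic lam)
    (hcond :
      (∃ pe : ℝ, 2 < pe ∧ D.MemLp (fun q => ‖D.grad D.H q‖) pe) ∨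
      (D.MemLp (fun q => ‖D.grad D.H q‖) 2 ∧
        ∃ c : ℝ, 0 < c ∧
          ∀ q (X : V), -(c * (1 + D.r q ^ 2)) * ‖X‖ ^ 2 ≤ D.ricci q X X)) :
    D.toHypersurfaceData.Minimal := by
  intro p
  obtain ⟨C, hC⟩ := hscal.exists_normA2_eq hgauss hmix
  have hbound := HypersurfaceData.two_mul_hess2_H_le_lap_norm_grad_H_sq hgauss hbh hC hnonpos
  have hsub : D.Subharmonic fun q => ‖D.grad D.H q‖ ^ 2 := fun q =>
    (mul_nonneg zero_le_two (D.hess2_nonneg D.H q)).trans (hbound q)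
  have hharm := D.lap_eq_zero_of_forall_eq (D.sq_eq_sq_of_subharmonic hsub hcond) p
  have hhess : D.hess2 D.H p = 0 :=
    le_antisymm (by linarith [hbound p]) (D.hess2_nonneg D.H p)
  have hlapH := D.lap_eq_zero_of_hess2_eq_zero hhess
  rw [hbh.1 p, mul_eq_zero] at hlapH
  rcases hlapH with hH | hA
  · exact hH
  · apply D.H_eq_zero_of_normA2_eq_zero hm.ne'
    linarith [hmix.lam_nonpos hnonpos p, D.normA2_nonneg p]
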